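/- Let Φ = C_n, D ⊆ Φ⁺ orthogonal with 2ε_1 ∈ D, and σ = ∏_{β∈D} r_β. Then every positive root with nonzero first coordinate is sent to a negative root by σ; i.e., C_1 = {ε_1 ± ε_l : 1 < l ≤ n} ∪ {2ε_1} ⊆ Φ_σ, and |C_1| = 2n − 1. -/

import Mathlib

/-!
Each reflection `r_β` with `β ∈ Φ⁺` acts on coordinates as a signed permutation of `1, …, n`, so
`σ` maps roots to roots. Every `β ∈ D` other than `2ε_1` is orthogonal to `2ε_1`, i.e. has zero
first coordinate, so `r_β` fixes the first coordinate while `r_{2ε_1}` negates it. Hence for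
`α ∈ C_1` the root `σα` has first coordinate `-α_1 < 0` and is negative. Finally
`C_1 = {ε_1 ± ε_l : 2 ≤ l ≤ n} ∪ {2ε_1}`.
-/

/-- The standard basis vector `ε_i` of `ℝ^n` (indices are 1-based, ambient type `ℕ → ℝ`). -/
noncomputable def eps (i : ℕ) : ℕ → ℝ := fun k => if k = i then 1 else 0

/-- The standard inner product on vectors supported on indices `0, …, n`. -/
noncomputable def ip (n : ℕ) (x y : ℕ → ℝ) : ℝ := ∑ k ∈ Finset.range (n + 1), x k * y k

/-- Positive roots of `B_n`: `ε_i ± ε_j` for `1 ≤ i < j ≤ n` and `ε_i` for `1 ≤ i ≤ n`. -/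
def PosB (n : ℕ) : Set (ℕ → ℝ) :=
  {v | ∃ i j : ℕ, 1 ≤ i ∧ i < j ∧ j ≤ n ∧ (v = eps i - eps j ∨ v = eps i + eps j)} ∪
  {v | ∃ i : ℕ, 1 ≤ i ∧ i ≤ n ∧ v = eps i}

/-- Positive roots of `C_n`: `ε_i ± ε_j` for `1 ≤ i < j ≤ n` and `2ε_i` for `1 ≤ i ≤ n`. -/
def PosC (n : ℕ) : Set (ℕ → ℝ) :=
  {v | ∃ i j : ℕ, 1 ≤ i ∧ i < j ∧ j ≤ n ∧ (v = eps i - eps j ∨ v = eps i + eps j)} ∪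
  {v | ∃ i : ℕ, 1 ≤ i ∧ i ≤ n ∧ v = (2 : ℝ) • eps i}

/-- Positive roots of `D_n`: `ε_i ± ε_j` for `1 ≤ i < j ≤ n`. -/
def PosD (n : ℕ) : Set (ℕ → ℝ) :=
  {v | ∃ i j : ℕ, 1 ≤ i ∧ i < j ∧ j ≤ n ∧ (v = eps i - eps j ∨ v = eps i + eps j)}

/-- The reflection `r_a(x) = x - (2(x,a)/(a,a)) a`. -/
noncomputable def rfl' (n : ℕ) (a : ℕ → ℝ) : Function.End (ℕ → ℝ) :=
  fun x => x - (2 * ip n x a / ip n a a) • a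

open Set

section InnerProduct

variable {n : ℕ}

lemma ip_eps_right {i : ℕ} (hi : i ≤ n) (x : ℕ → ℝ) : ip n x (eps i) = x i := by
  rw [ip, Finset.sum_eq_single_of_mem i (Finset.mem_range.2 (Nat.lt_succ_of_le hi))]
  · simp [eps]
  · intro k _ hk
    simp [eps, hk]

lemma ip_add_right (x y z : ℕ → ℝ) : ip n x (y + z) = ip n x y + ip n x z := by
  simp [ip, mul_add, Finset.sum_add_distrib]

lemma ip_sub_right (x y z : ℕ → ℝ) : ip n x (y - z) = ip n x y - ip n x z := by
  simp [ip, mul_sub, Finset.sum_sub_distrib]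

lemma ip_smul_right (c : ℝ) (x y : ℕ → ℝ) : ip n x (c • y) = c * ip n x y := by
  simp [ip, Finset.mul_sum, mul_left_comm]

end InnerProduct

lemma eps_injective : Function.Injective eps := by
  intro a b h
  simpa [eps] using congrFun h a

lemma eps_apply_perm (π : Equiv.Perm ℕ) (p m : ℕ) : eps p (π m) = eps (π.symm p) m := by
  simp only [eps, ← Equiv.eq_symm_apply]

lemma mul_eps_apply (c : ℕ → ℝ) (p m : ℕ) : c m * eps p m = c p * eps p m := by
  unfold eps
  split_ifs with h <;> simp [h]

/-- The full root system of `C_n`: `±ε_p ± ε_q` (`p ≠ q`) and `±2ε_p`. -/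
def rootsC (n : ℕ) : Set (ℕ → ℝ) :=
  {v | ∃ p ∈ Icc 1 n, ∃ q ∈ Icc 1 n, p ≠ q ∧
    ∃ s t : ℝ, |s| = 1 ∧ |t| = 1 ∧ v = s • eps p + t • eps q} ∪
  {v | ∃ p ∈ Icc 1 n, ∃ s : ℝ, |s| = 2 ∧ v = s • eps p}

lemma posC_subset_rootsC (n : ℕ) : PosC n ⊆ rootsC n := by
  rintro v (⟨i, j, hi, hij, hjn, rfl | rfl⟩ | ⟨i, hi, hin, rfl⟩)
  · exact Or.inl ⟨i, ⟨hi, by omega⟩, j, ⟨by omega, hjn⟩, hij.ne, 1, -1, by simp, by simp,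
      by module⟩
  · exact Or.inl ⟨i, ⟨hi, by omega⟩, j, ⟨by omega, hjn⟩, hij.ne, 1, 1, by simp, by simp,
      by module⟩
  · exact Or.inr ⟨i, ⟨hi, hin⟩, 2, by simp, rfl⟩

lemma signedPerm_mem_rootsC {n : ℕ} {π : Equiv.Perm ℕ}
    (hπ : MapsTo π.symm (Icc 1 n) (Icc 1 n)) {c : ℕ → ℝ} (hc : ∀ m, |c m| = 1)
    {v : ℕ → ℝ} (hv : v ∈ rootsC n) : (fun m => c m * v (π m)) ∈ rootsC n := by
  have hterm : ∀ s p,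
      (fun m => c m * (s * eps p (π m))) = (s * c (π.symm p)) • eps (π.symm p) := by
    intro s p
    funext m
    rw [eps_apply_perm, mul_left_comm, mul_eps_apply, Pi.smul_apply, smul_eq_mul]
    ring
  rcases hv with ⟨p, hp, q, hq, hpq, s, t, hs, ht, rfl⟩ | ⟨p, hp, s, hs, rfl⟩
  · refine Or.inl ⟨_, hπ hp, _, hπ hq, π.symm.injective.ne hpq, s * c (π.symm p),
      t * c (π.symm q), by rw [abs_mul, hs, hc, one_mul], by rw [abs_mul, ht, hc, one_mul], ?_⟩
    rw [← hterm, ← hterm]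
    funext m
    simp only [Pi.add_apply, Pi.smul_apply, smul_eq_mul]
    ring
  · exact Or.inr ⟨_, hπ hp, s * c (π.symm p), by rw [abs_mul, hs, hc, mul_one], hterm s p⟩

section Reflection

variable {n : ℕ}

lemma rfl'_apply (a x : ℕ → ℝ) (m : ℕ) :
    rfl' n a x m = x m - 2 * ip n x a / ip n a a * a m := rfl

lemma rfl'_apply_of_eq_zero {a : ℕ → ℝ} {k : ℕ} (ha : a k = 0) (x : ℕ → ℝ) :
    rfl' n a x k = x k := by
  simp [rfl'_apply, ha]

lemma rfl'_eps_sub {i j : ℕ} (hi : i ≤ n) (hj : j ≤ n) (hij : i ≠ j) (x : ℕ → ℝ) :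
    rfl' n (eps i - eps j) x = fun m => x (Equiv.swap i j m) := by
  have hip : ∀ y, ip n y (eps i - eps j) = y i - y j := fun y => by
    rw [ip_sub_right, ip_eps_right hi, ip_eps_right hj]
  funext m
  simp only [rfl'_apply, hip, Equiv.swap_apply_def, Pi.sub_apply, eps]
  split_ifs <;> subst_vars <;> first | (exfalso; omega) | ring

lemma rfl'_eps_add {i j : ℕ} (hi : i ≤ n) (hj : j ≤ n) (hij : i ≠ j) (x : ℕ → ℝ) :
    rfl' n (eps i + eps j) x =
      fun m => (if m = i ∨ m = j then -1 else 1) * x (Equiv.swap i j m) := by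
  have hip : ∀ y, ip n y (eps i + eps j) = y i + y j := fun y => by
    rw [ip_add_right, ip_eps_right hi, ip_eps_right hj]
  funext m
  simp only [rfl'_apply, hip, Equiv.swap_apply_def, Pi.add_apply, eps]
  split_ifs <;> subst_vars <;> first | (exfalso; omega) | ring

lemma rfl'_two_smul_eps {i : ℕ} (hi : i ≤ n) (x : ℕ → ℝ) :
    rfl' n ((2 : ℝ) • eps i) x = fun m => (if m = i then -1 else 1) * x m := by
  have hip : ∀ y, ip n y ((2 : ℝ) • eps i) = 2 * y i := fun y => by
    rw [ip_smul_right, ip_eps_right hi]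
  funext m
  simp only [rfl'_apply, hip, Pi.smul_apply, smul_eq_mul, eps]
  split_ifs <;> subst_vars <;> ring

lemma rfl'_two_smul_eps_apply_self {i : ℕ} (hi : i ≤ n) (x : ℕ → ℝ) :
    rfl' n ((2 : ℝ) • eps i) x i = -x i := by
  simp [rfl'_two_smul_eps hi]

lemma abs_ite_neg_one_one (P : Prop) [Decidable P] : |(if P then -1 else 1 : ℝ)| = 1 := by
  split_ifs <;> simp

lemma mapsTo_swap_Icc {i j : ℕ} (hi : i ∈ Icc 1 n) (hj : j ∈ Icc 1 n) :
    MapsTo (Equiv.swap i j).symm (Icc 1 n) (Icc 1 n) := by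
  intro m hm
  rw [Equiv.symm_swap, Equiv.swap_apply_def]
  split_ifs <;> assumption

lemma rfl'_mem_rootsC {β x : ℕ → ℝ} (hβ : β ∈ PosC n) (hx : x ∈ rootsC n) :
    rfl' n β x ∈ rootsC n := by
  rcases hβ with ⟨i, j, hi, hij, hjn, rfl | rfl⟩ | ⟨i, hi, hin, rfl⟩
  · rw [rfl'_eps_sub (by omega) hjn hij.ne]
    simpa using signedPerm_mem_rootsC (mapsTo_swap_Icc ⟨hi, by omega⟩ ⟨by omega, hjn⟩)
      (c := 1) (fun _ => abs_one) hx
  · rw [rfl'_eps_add (by omega) hjn hij.ne]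
    exact signedPerm_mem_rootsC (mapsTo_swap_Icc ⟨hi, by omega⟩ ⟨by omega, hjn⟩)
      (fun _ => abs_ite_neg_one_one _) hx
  · rw [rfl'_two_smul_eps hin]
    exact signedPerm_mem_rootsC (π := Equiv.refl ℕ) (fun _ hm => hm)
      (fun _ => abs_ite_neg_one_one _) hx

end Reflection

section ListProd

variable {n : ℕ}

lemma list_prod_map_rfl'_cons_apply (β : ℕ → ℝ) (M : List (ℕ → ℝ)) (x : ℕ → ℝ) :
    ((β :: M).map (rfl' n)).prod x = rfl' n β ((M.map (rfl' n)).prod x) := rfl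

lemma list_prod_map_rfl'_append_apply (M N : List (ℕ → ℝ)) (x : ℕ → ℝ) :
    ((M ++ N).map (rfl' n)).prod x = (M.map (rfl' n)).prod ((N.map (rfl' n)).prod x) := by
  rw [List.map_append, List.prod_append]
  rfl

lemma list_prod_map_rfl'_mem_rootsC {M : List (ℕ → ℝ)} (hM : ∀ β ∈ M, β ∈ PosC n)
    {x : ℕ → ℝ} (hx : x ∈ rootsC n) : (M.map (rfl' n)).prod x ∈ rootsC n := by
  induction M with
  | nil => exact hx
  | cons β M ih =>
    rw [list_prod_map_rfl'_cons_apply]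
    exact rfl'_mem_rootsC (hM β List.mem_cons_self)
      (ih fun b hb => hM b (List.mem_cons_of_mem β hb))

lemma list_prod_map_rfl'_apply_of_eq_zero {M : List (ℕ → ℝ)} {k : ℕ} (hM : ∀ β ∈ M, β k = 0)
    (x : ℕ → ℝ) : (M.map (rfl' n)).prod x k = x k := by
  induction M with
  | nil => rfl
  | cons β M ih =>
    rw [list_prod_map_rfl'_cons_apply, rfl'_apply_of_eq_zero (hM β List.mem_cons_self)]
    exact ih fun b hb => hM b (List.mem_cons_of_mem β hb)

lemma list_prod_map_rfl'_apply_eq_neg {M : List (ℕ → ℝ)} {k : ℕ} (hk : k ≤ n) (hM : M.Nodup)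
    (hmem : (2 : ℝ) • eps k ∈ M) (hzero : ∀ β ∈ M, β ≠ (2 : ℝ) • eps k → β k = 0)
    (x : ℕ → ℝ) : (M.map (rfl' n)).prod x k = -x k := by
  obtain ⟨s, t, rfl⟩ := List.append_of_mem hmem
  have hnot : (2 : ℝ) • eps k ∉ s ++ t := (List.nodup_cons.1 (List.nodup_middle.1 hM)).1
  have hzero' : ∀ β ∈ s ++ t, β k = 0 := fun β hβ =>
    hzero β (by simp only [List.mem_append, List.mem_cons] at hβ ⊢; tauto)
      (ne_of_mem_of_not_mem hβ hnot)
  rw [list_prod_map_rfl'_append_apply,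
    list_prod_map_rfl'_apply_of_eq_zero fun β hβ => hzero' β (List.mem_append_left t hβ),
    list_prod_map_rfl'_cons_apply, rfl'_two_smul_eps_apply_self hk,
    list_prod_map_rfl'_apply_of_eq_zero fun β hβ => hzero' β (List.mem_append_right s hβ)]

end ListProd

lemma posC_apply_one_nonneg {n : ℕ} {α : ℕ → ℝ} (hα : α ∈ PosC n) : 0 ≤ α 1 := by
  rcases hα with ⟨i, j, hi, hij, hjn, rfl | rfl⟩ | ⟨i, hi, hin, rfl⟩ <;>
    simp only [Pi.sub_apply, Pi.add_apply, Pi.smul_apply, smul_eq_mul, eps] <;>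
    split_ifs <;> first | omega | norm_num

lemma eps_one_add_smul_mem_posC {n q : ℕ} (hq : q ∈ Icc 2 n) {t : ℝ} (ht : |t| = 1) :
    eps 1 + t • eps q ∈ PosC n := by
  rcases (abs_eq zero_le_one).1 ht with rfl | rfl
  · exact Or.inl ⟨1, q, le_rfl, hq.1, hq.2, Or.inr (by rw [one_smul])⟩
  · exact Or.inl ⟨1, q, le_rfl, hq.1, hq.2, Or.inl (by module)⟩

lemma neg_mem_posC_of_apply_one_neg {n : ℕ} {v : ℕ → ℝ} (hv : v ∈ rootsC n) (h : v 1 < 0) :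
    -v ∈ PosC n := by
  rcases hv with ⟨p, hp, q, hq, hpq, s, t, hs, ht, rfl⟩ | ⟨p, hp, s, hs, rfl⟩
  · wlog hp1 : p = 1 generalizing p q s t
    · by_cases hq1 : q = 1
      · exact add_comm (s • eps p) _ ▸
          this q hq p hp hpq.symm t s ht hs (add_comm (s • eps p) _ ▸ h) hq1
      · simp [eps, Ne.symm hp1, Ne.symm hq1] at h
    subst hp1
    have hs' : s = -1 := by
      have : s < 0 := by simpa [eps, hpq] using h
      linarith [abs_of_neg this]
    subst hs'
    have : -((-1 : ℝ) • eps 1 + t • eps q) = eps 1 + (-t) • eps q := by module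
    rw [this]
    exact eps_one_add_smul_mem_posC ⟨lt_of_le_of_ne hq.1 hpq, hq.2⟩ (by rw [abs_neg, ht])
  · have hp1 : p = 1 := by
      by_contra hp1
      simp [eps, Ne.symm hp1] at h
    subst hp1
    have hs' : s = -2 := by
      have : s < 0 := by simpa [eps] using h
      linarith [abs_of_neg this]
    subst hs'
    exact Or.inr ⟨1, le_rfl, hp.2, by module⟩

section FirstColumn

variable {n : ℕ}

lemma eps_one_sub_ne_eps_one_add {l l' : ℕ} (hl : l ≠ 1) : eps 1 - eps l ≠ eps 1 + eps l' := by
  intro h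
  have := congrFun h l
  simp only [Pi.sub_apply, Pi.add_apply, eps, if_neg hl] at this
  split_ifs at this <;> norm_num at this

lemma eps_one_add_smul_ne_two_smul_eps_one {l : ℕ} (hl : l ≠ 1) (t : ℝ) :
    eps 1 + t • eps l ≠ (2 : ℝ) • eps 1 := by
  intro h
  have := congrFun h 1
  simp [eps, Ne.symm hl] at this

lemma setOf_mem_posC_apply_one_ne_zero (hn : 1 ≤ n) :
    {α ∈ PosC n | α 1 ≠ 0} =
      (fun l => eps 1 - eps l) '' Icc 2 n ∪ (fun l => eps 1 + eps l) '' Icc 2 n ∪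
        {(2 : ℝ) • eps 1} := by
  ext α
  constructor
  · rintro ⟨⟨i, j, hi, hij, hjn, hα⟩ | ⟨i, hi, hin, rfl⟩, h1⟩
    · obtain rfl : i = 1 := by
        by_contra hi1
        rcases hα with rfl | rfl <;> simp [eps, Ne.symm hi1, show 1 ≠ j by omega] at h1
      rcases hα with rfl | rfl
      · exact Or.inl (Or.inl ⟨j, ⟨hij, hjn⟩, rfl⟩)
      · exact Or.inl (Or.inr ⟨j, ⟨hij, hjn⟩, rfl⟩)
    · obtain rfl : i = 1 := by
        by_contra hi1
        simp [eps, Ne.symm hi1] at h1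
      exact Or.inr rfl
  · rintro ((⟨l, ⟨hl, hln⟩, rfl⟩ | ⟨l, ⟨hl, hln⟩, rfl⟩) | rfl)
    · exact ⟨Or.inl ⟨1, l, le_rfl, hl, hln, Or.inl rfl⟩, by simp [eps, show 1 ≠ l by omega]⟩
    · exact ⟨Or.inl ⟨1, l, le_rfl, hl, hln, Or.inr rfl⟩, by simp [eps, show 1 ≠ l by omega]⟩
    · exact ⟨Or.inr ⟨1, le_rfl, hn, rfl⟩, by simp [eps]⟩

lemma ncard_setOf_mem_posC_apply_one_ne_zero (hn : 1 ≤ n) :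
    {α ∈ PosC n | α 1 ≠ 0}.ncard = 2 * n - 1 := by
  have hIcc : ∀ l ∈ Icc 2 n, l ≠ 1 := fun l hl => by have := hl.1; omega
  rw [setOf_mem_posC_apply_one_ne_zero hn, ncard_union_eq, ncard_union_eq,
    ncard_image_of_injective _ fun _ _ h => eps_injective (sub_right_injective h),
    ncard_image_of_injective _ fun _ _ h => eps_injective (add_right_injective _ h),
    ncard_singleton, ncard_Icc_nat]
  · omega
  · exact disjoint_image_image fun l hl l' _ => eps_one_sub_ne_eps_one_add (hIcc l hl)
  · rw [disjoint_singleton_right]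
    rintro ((⟨l, hl, h⟩ | ⟨l, hl, h⟩))
    · exact eps_one_add_smul_ne_two_smul_eps_one (hIcc l hl) (-1) (by rw [← h]; module)
    · exact eps_one_add_smul_ne_two_smul_eps_one (hIcc l hl) 1 (by rw [← h, one_smul])

end FirstColumn

open Classical in
/-- Let `Φ = C_n`, `D ⊆ Φ⁺` orthogonal with `2ε_1 ∈ D`, and `σ = ∏_{β ∈ D} r_β`. Then every
positive root with nonzero first coordinate (i.e. the first column `C_1`) is sent to a negative
root by `σ`, and `|C_1| = 2n - 1`. -/
theorem stmt16 (n : ℕ) (hn : 1 ≤ n)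
    (D : Finset (ℕ → ℝ)) (hD : ↑D ⊆ PosC n)
    (horth : ∀ a ∈ D, ∀ b ∈ D, a ≠ b → ip n a b = 0)
    (hmem : (2 : ℝ) • eps 1 ∈ D)
    (L : List (ℕ → ℝ)) (hL : L.Nodup) (hLD : L.toFinset = D) :
    {α ∈ PosC n | α 1 ≠ 0}
        ⊆ {α ∈ PosC n | -((L.map (rfl' n)).prod α) ∈ PosC n} ∧
    Set.ncard {α ∈ PosC n | α 1 ≠ 0} = 2 * n - 1 := by
  subst hLD
  refine ⟨fun α ⟨hα, hα1⟩ => ⟨hα, ?_⟩, ncard_setOf_mem_posC_apply_one_ne_zero hn⟩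
  have hzero : ∀ β ∈ L, β ≠ (2 : ℝ) • eps 1 → β 1 = 0 := fun β hβ hne => by
    have := horth β (List.mem_toFinset.2 hβ) _ hmem hne
    rwa [ip_smul_right, ip_eps_right hn, mul_eq_zero, or_iff_right two_ne_zero] at this
  have hneg : (L.map (rfl' n)).prod α 1 = -α 1 :=
    list_prod_map_rfl'_apply_eq_neg hn hL (List.mem_toFinset.1 hmem) hzero α
  refine neg_mem_posC_of_apply_one_neg ?_ ?_
  · exact list_prod_map_rfl'_mem_rootsC (fun β hβ => hD (List.mem_toFinset.2 hβ))
      (posC_subset_rootsC n hα)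
  · rw [hneg, neg_lt_zero]
    exact lt_of_le_of_ne (posC_apply_one_nonneg hα) (Ne.symm hα1)
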